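/- A scale-invariant spectrum cannot be generated in a slowly expanding or contracting background without a large friction coefficient: if ε > 0, ν and m are real with 0 < |ν| ≤ ε and 2L(ν,m) + 3 = 0, then |m − 1| ≥ 2/ε. -/
import Mathlib

/-- L(ν,m) = −(1/2)·|(m−1)ν − 1| -/
noncomputable def Lidx (ν m : ℝ) : ℝ := -(1/2) * |(m - 1) * ν - 1|

/-- No scale-invariant spectrum in a slowly expanding/contracting background
    without a large friction coefficient: if 0 < |ν| ≤ ε and 2L(ν,m)+3 = 0, then
    |m − 1| ≥ 2/ε. -/
theorem slow_background_needs_large_friction (ε ν m : ℝ) (hε : 0 < ε)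
    (hν : 0 < |ν|) (hνε : |ν| ≤ ε) (h : 2 * Lidx ν m + 3 = 0) :
    2 / ε ≤ |m - 1| := by
  have habs : |(m - 1) * ν - 1| = 3 := by unfold Lidx at h; linarith
  have h2 : (2:ℝ) ≤ |(m - 1) * ν| := by
    rcases abs_eq (by norm_num : (0:ℝ) ≤ 3) |>.mp habs with h' | h'
    · rw [abs_of_pos (by linarith)]; linarith
    · rw [abs_of_neg (by linarith)]; linarith
  rw [abs_mul] at h2
  rw [div_le_iff₀ hε]
  calc (2:ℝ) ≤ |m - 1| * |ν| := h2
    _ ≤ |m - 1| * ε := by nlinarith [abs_nonneg (m-1)]
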